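/- For n ≥ 6, c < 0 and y > -n²c, one has (y/n + nc)·(1 - α̊'(y)·y/α̊(y)) = ((n-2)y/√(y² + 4(n-1)cy) + n)·c, and this quantity is less than (2n-2)c. -/

import Mathlib

/-!
Write `s = √(y² + 4(N-1)cy)`. Since `s² = y² + 4(N-1)cy`, the linear terms cancel in
`α̊ - y α̊' = c (N s - (N-2) y) / s`, and clearing denominators gives
`N (N s + (N-2) y) α̊ = (y + N² c) (N s - (N-2) y)`. The factor `N s - (N-2) y` therefore
cancels, leaving `c (N s + (N-2) y) / s`; the factor is nonzero because
`(N s)² - ((N-2) y)² = 4 (N-1) y (y + N² c)`. The inequality is `s < y`, i.e. `c < 0`.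
-/

noncomputable def alphaCirc (N c z : ℝ) : ℝ :=
  N * c + ((N^2 - 2*N + 2) / (2 * (N - 1) * N)) * z
    - ((N - 2) / (2 * (N - 1))) * √(z^2 + 4 * (N - 1) * c * z)

section
variable {N c y : ℝ}

theorem hasDerivAt_alphaCirc (hQ : y^2 + 4*(N-1)*c*y ≠ 0) :
    HasDerivAt (alphaCirc N c)
      ((N^2 - 2*N + 2) / (2 * (N - 1) * N)
        - (N - 2) / (2 * (N - 1)) * ((2*y + 4*(N-1)*c) / (2 * √(y^2 + 4*(N-1)*c*y)))) y := by
  have hQ' : HasDerivAt (fun z => z^2 + 4*(N-1)*c*z) (2*y + 4*(N-1)*c) y :=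
    ((hasDerivAt_pow 2 y).add ((hasDerivAt_id' y).const_mul (4*(N-1)*c))).congr_deriv
      (by norm_num)
  exact ((((hasDerivAt_id' y).const_mul _).const_add (N*c)).sub
    ((hQ'.sqrt hQ).const_mul _)).congr_deriv (by ring)

theorem alphaCirc_sub_mul_deriv (hN0 : N ≠ 0) (hN : N ≠ 1) (hQ : 0 < y^2 + 4*(N-1)*c*y) :
    alphaCirc N c y - y * deriv (alphaCirc N c) y
      = c * (N * √(y^2 + 4*(N-1)*c*y) - (N - 2) * y) / √(y^2 + 4*(N-1)*c*y) := by
  rw [(hasDerivAt_alphaCirc hQ.ne').deriv, alphaCirc]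
  have hs := Real.sq_sqrt hQ.le
  have hs0 := (Real.sqrt_pos.mpr hQ).ne'
  have hN1 : N - 1 ≠ 0 := sub_ne_zero.mpr hN
  set s := √(y^2 + 4*(N-1)*c*y)
  field_simp
  linear_combination (-2*N*(N - 2)) * hs

theorem mul_alphaCirc (hN0 : N ≠ 0) (hN : N ≠ 1) (hQ : 0 ≤ y^2 + 4*(N-1)*c*y) :
    N * (N * √(y^2 + 4*(N-1)*c*y) + (N - 2) * y) * alphaCirc N c y
      = (y + N^2 * c) * (N * √(y^2 + 4*(N-1)*c*y) - (N - 2) * y) := by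
  rw [alphaCirc]
  have hs := Real.sq_sqrt hQ
  have hN1 : N - 1 ≠ 0 := sub_ne_zero.mpr hN
  set s := √(y^2 + 4*(N-1)*c*y)
  field_simp
  linear_combination (-N^2*(N-2)) * hs

theorem mul_one_sub_elasticity_alphaCirc (hN0 : N ≠ 0) (hN : N ≠ 1)
    (hQ : 0 < y^2 + 4*(N-1)*c*y) (hyc : y + N^2 * c ≠ 0) :
    (y / N + N * c) * (1 - deriv (alphaCirc N c) y * y / alphaCirc N c y)
      = ((N - 2) * y / √(y^2 + 4*(N-1)*c*y) + N) * c := by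
  have hsub := alphaCirc_sub_mul_deriv hN0 hN hQ
  have hmul := mul_alphaCirc hN0 hN hQ.le
  have hs := Real.sq_sqrt hQ.le
  have hs0 := (Real.sqrt_pos.mpr hQ).ne'
  set s := √(y^2 + 4*(N-1)*c*y)
  have hy0 : y ≠ 0 := by rintro rfl; simp at hQ
  have hN1 : N - 1 ≠ 0 := sub_ne_zero.mpr hN
  have hprod : (N * s - (N - 2) * y) * (N * s + (N - 2) * y) ≠ 0 := by
    rw [show (N * s - (N - 2) * y) * (N * s + (N - 2) * y) = 4 * (N - 1) * y * (y + N^2 * c) by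
      linear_combination N^2 * hs]
    positivity
  obtain ⟨hminus, hplus⟩ := mul_ne_zero_iff.mp hprod
  have hα :
      alphaCirc N c y = (y + N^2 * c) * (N * s - (N - 2) * y) / (N * (N * s + (N - 2) * y)) :=
    eq_div_of_mul_eq (by positivity) (by rw [← hmul]; ring)
  have hα0 : alphaCirc N c y ≠ 0 := by rw [hα]; positivity
  calc (y / N + N * c) * (1 - deriv (alphaCirc N c) y * y / alphaCirc N c y)
      = (y + N^2 * c) / N * (alphaCirc N c y - y * deriv (alphaCirc N c) y) / alphaCirc N c y := by
        field_simp
    _ = ((N - 2) * y / s + N) * c := by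
        rw [hsub, hα]
        -- as an atom, `D` is cancelled by `field_simp` using `hminus`
        set D := N * s - (N - 2) * y
        field_simp
        ring

theorem div_sqrt_add_mul_lt_of_neg (hN : 2 < N) (hc : c < 0) (hy : 0 < y)
    (hQ : 0 < y^2 + 4*(N-1)*c*y) :
    ((N - 2) * y / √(y^2 + 4*(N-1)*c*y) + N) * c < (2 * N - 2) * c := by
  have hs0 := Real.sqrt_pos.mpr hQ
  have hsy : √(y^2 + 4*(N-1)*c*y) < y := (Real.sqrt_lt' hy).mpr <| by
    nlinarith [mul_pos (mul_pos (by linarith : 0 < N - 1) (neg_pos.mpr hc)) hy]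
  have hdiv : 1 < y / √(y^2 + 4*(N-1)*c*y) := (one_lt_div hs0).mpr hsy
  rw [mul_div_assoc]
  nlinarith [mul_neg_of_pos_of_neg (mul_pos (sub_pos.mpr hN) (sub_pos.mpr hdiv)) hc]

end

theorem stmt_12 (n : ℕ) (hn : 6 ≤ n) (c : ℝ) (hc : c < 0) (y : ℝ) (hy : y > -(n^2 : ℝ) * c)
    (α : ℝ → ℝ)
    (hα : ∀ z : ℝ, α z = n * c + ((n^2 - 2*n + 2 : ℝ) / (2 * (n - 1) * n)) * z
      - ((n - 2 : ℝ) / (2 * (n - 1))) * Real.sqrt (z^2 + 4 * (n - 1) * c * z)) :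
    (y / n + n * c) * (1 - deriv α y * y / α y)
      = (((n : ℝ) - 2) * y / Real.sqrt (y^2 + 4 * (n - 1) * c * y) + n) * c ∧
    (y / n + n * c) * (1 - deriv α y * y / α y) < (2 * (n : ℝ) - 2) * c := by
  have hN : (6 : ℝ) ≤ n := by exact_mod_cast hn
  obtain rfl : α = alphaCirc n c := funext hα
  have hy0 : 0 < y := by nlinarith
  -- `4 (n - 1) c ≥ n² c` because `(n - 2)² ≥ 0` and `c < 0`
  have hQ : 0 < y^2 + 4 * (n - 1) * c * y := by
    nlinarith [mul_nonneg (sq_nonneg ((n : ℝ) - 2)) hy0.le]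
  have heq := mul_one_sub_elasticity_alphaCirc (by linarith) (by linarith) hQ (by linarith)
  exact ⟨heq, heq ▸ div_sqrt_add_mul_lt_of_neg (by linarith) hc hy0 hQ⟩
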